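/- arXiv:2602.05713 — 6 statements merged into one kernel-verified Lean document; each statement's English description precedes it below -/
import Mathlib

section
/- Consider boosting for T rounds in the setup below, where at each round t the margin vector m^t ∈ {−1, +1}^n is arbitrary, ε_t = Σ_{i : m^t_i = −1} q^t_i satisfies 0 < ε_t < 1, and α_t = (1/2)·ln((1 − ε_t)/ε_t). Suppose for each round t there is a distribution w^t ∈ Δ_n such that, with γ_t^(w) = (1/2)·Σ_{i=1}^n w^t_i m^t_i and δ_t = √( KL(w^t ‖ q^t) / 2 ), one has γ_t^(w) > δ_t. Then the final exponential loss satisfies L_exp(f_T) ≤ n · exp( −2 · Σ_{t=1}^T (γ_t^(w) − δ_t)^2 ). -/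
/-- Cumulative score of example `i` after `t` rounds: `s_{t,i} = Σ_{s=1}^t α_s · m^s_i`. -/
noncomputable def cumScore (n : ℕ) (m : ℕ → Fin n → ℝ) (α : ℕ → ℝ) (t : ℕ) (i : Fin n) : ℝ :=
  ∑ s ∈ Finset.Icc 1 t, α s * m s i

/-- Exponential loss after `t` rounds: `L_exp(f_t) = Σ_i exp(−s_{t,i})`. -/
noncomputable def expLoss (n : ℕ) (m : ℕ → Fin n → ℝ) (α : ℕ → ℝ) (t : ℕ) : ℝ :=
  ∑ i, Real.exp (-(cumScore n m α t i))

/-- Exponential-weights distribution at round `t`: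
`q^t_i = exp(−s_{t−1,i}) / L_exp(f_{t−1})`. -/
noncomputable def expWeights (n : ℕ) (m : ℕ → Fin n → ℝ) (α : ℕ → ℝ) (t : ℕ) (i : Fin n) : ℝ :=
  Real.exp (-(cumScore n m α (t - 1) i)) / expLoss n m α (t - 1)

/-- Kullback–Leibler divergence on the finite simplex
(with the convention `0 · ln 0 = 0`, which holds automatically since `0 * x = 0`). -/
noncomputable def klDiv (n : ℕ) (p q : Fin n → ℝ) : ℝ :=
  ∑ i, p i * Real.log (p i / q i)

/-!
Under the exponential weights `q^t`, the weak learner of round `t` has edge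
`γ_t = ½ Σ_i q^t_i m^t_i = ½ - ε_t`, and with the optimal step `α_t` the loss is multiplied by
`2 √(ε_t (1 - ε_t)) = √(1 - 4 γ_t²) ≤ exp (-2 γ_t²)`. Pinsker's inequality, applied to the event
`{m^t = 1}`, shows that moving from `q^t` to `w^t` changes the edge by at most
`√(KL(w^t ‖ q^t) / 2) = δ_t`, so `γ_t ≥ γ_t^(w) - δ_t > 0` and the loss drops by at least
`exp (-2 (γ_t^(w) - δ_t)²)` in every round.
-/

open Real Finset

theorem logit_sub_four_mul_monotoneOn :
    MonotoneOn (fun x : ℝ => log x - log (1 - x) - 4 * x) (Set.Ioo 0 1) := by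
  have hderiv : ∀ x ∈ Set.Ioo (0 : ℝ) 1,
      HasDerivAt (fun x : ℝ => log x - log (1 - x) - 4 * x) (x⁻¹ + (1 - x)⁻¹ - 4) x := by
    rintro x ⟨hx0, hx1⟩
    have hlog₁ := ((hasDerivAt_id x).const_sub 1).log (sub_ne_zero.2 hx1.ne')
    exact (((hasDerivAt_log hx0.ne').sub hlog₁).sub ((hasDerivAt_id x).const_mul 4)).congr_deriv
      (by simp only [id]; ring)
  refine monotoneOn_of_deriv_nonneg (convex_Ioo 0 1)
    (fun x hx => (hderiv x hx).continuousAt.continuousWithinAt)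
    (fun x hx => (hderiv x (interior_subset hx)).differentiableAt.differentiableWithinAt) ?_
  rw [interior_Ioo]
  rintro x ⟨hx0, hx1⟩
  rw [(hderiv x ⟨hx0, hx1⟩).deriv]
  have hx1' : 0 < 1 - x := by linarith
  have : x⁻¹ + (1 - x)⁻¹ - 4 = (2 * x - 1) ^ 2 / (x * (1 - x)) := by field_simp; ring
  rw [this]
  positivity

theorem mul_log_div_eq {x y : ℝ} (hy : y ≠ 0) : x * log (x / y) = x * log x - x * log y := by
  rcases eq_or_ne x 0 with rfl | hx
  · simp
  · rw [log_div hx hy]; ring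

theorem binary_pinsker {a b : ℝ} (ha₀ : 0 ≤ a) (ha₁ : a ≤ 1) (hb₀ : 0 < b) (hb₁ : b < 1) :
    2 * (a - b) ^ 2 ≤ a * log (a / b) + (1 - a) * log ((1 - a) / (1 - b)) := by
  -- `F x` is the binary divergence `kl(x ‖ b)` minus `2 (x - b) ^ 2`
  set F : ℝ → ℝ := fun x => -binEntropy x - (x * log b + (1 - x) * log (1 - b)) - 2 * (x - b) ^ 2
  have hF : Continuous F := by fun_prop
  have hF' : ∀ x ∈ Set.Ioo (0 : ℝ) 1, HasDerivAt F
      ((log x - log (1 - x) - 4 * x) - (log b - log (1 - b) - 4 * b)) x := by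
    rintro x ⟨hx0, hx1⟩
    exact (((hasDerivAt_binEntropy hx0.ne' hx1.ne).neg.sub
      (((hasDerivAt_id x).mul_const (log b)).add
        (((hasDerivAt_id x).const_sub 1).mul_const (log (1 - b))))).sub
      ((((hasDerivAt_id x).sub_const b).pow 2).const_mul 2)).congr_deriv (by simp only [id]; ring)
  have hbmem : b ∈ Set.Ioo (0 : ℝ) 1 := ⟨hb₀, hb₁⟩
  have hmin : IsMinOn F (Set.Icc 0 1) b := by
    refine isMinOn_Icc_of_deriv hF.continuousAt hF.continuousAt hF.continuousAt
      (fun x hx => (hF' x ⟨hx.1, hx.2.trans hb₁⟩).differentiableAt.differentiableWithinAt)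
      (fun x hx => (hF' x ⟨hb₀.trans hx.1, hx.2⟩).differentiableAt.differentiableWithinAt)
      (fun x ⟨hx0, hxb⟩ => ?_) (fun x ⟨hbx, hx1⟩ => ?_)
    · rw [(hF' x ⟨hx0, hxb.trans hb₁⟩).deriv, sub_nonpos]
      exact logit_sub_four_mul_monotoneOn ⟨hx0, hxb.trans hb₁⟩ hbmem hxb.le
    · rw [(hF' x ⟨hb₀.trans hbx, hx1⟩).deriv, sub_nonneg]
      exact logit_sub_four_mul_monotoneOn hbmem ⟨hb₀.trans hbx, hx1⟩ hbx.le
  have hFa : F b ≤ F a := hmin ⟨ha₀, ha₁⟩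
  simp only [F, binEntropy_eq_negMulLog_add_negMulLog_one_sub, negMulLog] at hFa
  rw [mul_log_div_eq hb₀.ne', mul_log_div_eq (sub_ne_zero.2 hb₁.ne')]
  linarith

theorem mul_log_sum_div_sum_le_sum_mul_log_div {ι : Type*} (s : Finset ι) {w q : ι → ℝ}
    (hw : ∀ i ∈ s, 0 ≤ w i) (hq : ∀ i ∈ s, 0 < q i) :
    (∑ i ∈ s, w i) * log ((∑ i ∈ s, w i) / ∑ i ∈ s, q i) ≤ ∑ i ∈ s, w i * log (w i / q i) := by
  rcases s.eq_empty_or_nonempty with rfl | hs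
  · simp
  set a := ∑ i ∈ s, w i
  set b := ∑ i ∈ s, q i
  have hb : 0 < b := sum_pos hq hs
  -- Jensen for `x ↦ x log x` with weights `q i / b` at the points `w i / q i`
  have hjensen := convexOn_mul_log.map_sum_le (t := s) (w := fun i => q i / b)
    (p := fun i => w i / q i) (fun i hi => div_nonneg (hq i hi).le hb.le)
    (by rw [← sum_div, div_self hb.ne']) (fun i hi => div_nonneg (hw i hi) (hq i hi).le)
  simp only [smul_eq_mul] at hjensen
  have hpoint : ∀ i ∈ s, q i / b * (w i / q i) = w i / b := fun i hi => by
    field_simp [(hq i hi).ne']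
  have hvalue : ∀ i ∈ s, q i / b * (w i / q i * log (w i / q i)) = w i * log (w i / q i) / b :=
    fun i hi => by field_simp [(hq i hi).ne']
  rw [sum_congr rfl hpoint, sum_congr rfl hvalue, ← sum_div, ← sum_div] at hjensen
  rwa [div_mul_eq_mul_div, div_le_div_iff_of_pos_right hb] at hjensen

section Margins

variable {ι : Type*} [Fintype ι]

theorem sum_sub_sum_le_sqrt_kl_div_two {w q : ι → ℝ} (hw₀ : ∀ i, 0 ≤ w i) (hw₁ : ∑ i, w i = 1)
    (hq₀ : ∀ i, 0 < q i) (hq₁ : ∑ i, q i = 1) (A : Finset ι) :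
    ∑ i ∈ A, w i - ∑ i ∈ A, q i ≤ √((∑ i, w i * log (w i / q i)) / 2) := by
  classical
  set a := ∑ i ∈ A, w i
  set b := ∑ i ∈ A, q i
  rcases le_or_gt a b with hab | hab
  · exact (sub_nonpos.2 hab).trans (sqrt_nonneg _)
  have hcompl : ∀ v : ι → ℝ, ∑ i ∈ Aᶜ, v i = ∑ i, v i - ∑ i ∈ A, v i := fun v => by
    rw [eq_sub_iff_add_eq, add_comm, sum_add_sum_compl]
  have ha₁ : a ≤ 1 := by
    have := sum_nonneg fun i (_ : i ∈ Aᶜ) => hw₀ i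
    rw [hcompl, hw₁] at this; linarith
  have hb₀ : 0 < b := by
    refine sum_pos (fun i _ => hq₀ i) (nonempty_of_sum_ne_zero (s := A) (f := w) ?_)
    linarith [sum_nonneg fun i (_ : i ∈ A) => (hq₀ i).le]
  have hbinary := binary_pinsker (sum_nonneg fun i _ => hw₀ i) ha₁ hb₀ (hab.trans_le ha₁)
  have hA := mul_log_sum_div_sum_le_sum_mul_log_div A (fun i _ => hw₀ i) (fun i _ => hq₀ i)
  have hAc := mul_log_sum_div_sum_le_sum_mul_log_div Aᶜ (fun i _ => hw₀ i) (fun i _ => hq₀ i)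
  rw [hcompl, hcompl q, hw₁, hq₁] at hAc
  have hkl : 2 * (a - b) ^ 2 ≤ ∑ i, w i * log (w i / q i) := by
    rw [← sum_add_sum_compl A]; linarith
  rw [le_sqrt (by linarith) (by nlinarith)]
  linarith

theorem sum_mul_comp_of_forall_eq_neg_one_or_eq_one {q m : ι → ℝ}
    (hm : ∀ i, m i = -1 ∨ m i = 1) (f : ℝ → ℝ) :
    ∑ i, q i * f (m i) =
      (∑ i with m i = -1, q i) * f (-1) + (∑ i with m i ≠ -1, q i) * f 1 := by
  rw [← sum_filter_add_sum_filter_not univ (fun i => m i = -1), sum_mul, sum_mul]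
  congr 1 <;> refine sum_congr rfl fun i hi => ?_
  · rw [(mem_filter.1 hi).2]
  · rw [(hm i).resolve_left (mem_filter.1 hi).2]

theorem half_sum_mul_sub_half_sum_mul_le_sqrt_kl_div_two {w q m : ι → ℝ}
    (hm : ∀ i, m i = -1 ∨ m i = 1) (hw₀ : ∀ i, 0 ≤ w i) (hw₁ : ∑ i, w i = 1)
    (hq₀ : ∀ i, 0 < q i) (hq₁ : ∑ i, q i = 1) :
    1 / 2 * ∑ i, w i * m i - 1 / 2 * ∑ i, q i * m i ≤ √((∑ i, w i * log (w i / q i)) / 2) := by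
  have hsplit (v : ι → ℝ) := sum_filter_add_sum_filter_not univ (fun i => m i = -1) v
  have hw := sum_mul_comp_of_forall_eq_neg_one_or_eq_one (q := w) hm id
  have hq := sum_mul_comp_of_forall_eq_neg_one_or_eq_one (q := q) hm id
  have hpinsker := sum_sub_sum_le_sqrt_kl_div_two hw₀ hw₁ hq₀ hq₁ {i | m i ≠ -1}
  simp only [id] at hw hq
  linarith [hsplit w, hsplit q]

theorem half_sum_mul_eq_half_sub_sum_ite {q m : ι → ℝ} (hm : ∀ i, m i = -1 ∨ m i = 1)
    (hq₁ : ∑ i, q i = 1) :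
    1 / 2 * ∑ i, q i * m i = 1 / 2 - ∑ i, if m i = -1 then q i else 0 := by
  have hsplit := sum_filter_add_sum_filter_not univ (fun i => m i = -1) q
  have hq := sum_mul_comp_of_forall_eq_neg_one_or_eq_one (q := q) hm id
  simp only [id] at hq
  rw [← sum_filter]
  linarith

end Margins

theorem le_mul_exp_sum_of_le_mul_exp {L c : ℕ → ℝ} {T : ℕ}
    (h : ∀ t < T, L (t + 1) ≤ L t * exp (c (t + 1))) :
    L T ≤ L 0 * exp (∑ t ∈ Icc 1 T, c t) := by
  induction T with
  | zero => simp
  | succ T ih =>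
    calc L (T + 1) ≤ L T * exp (c (T + 1)) := h T T.lt_succ_self
      _ ≤ L 0 * exp (∑ t ∈ Icc 1 T, c t) * exp (c (T + 1)) :=
        mul_le_mul_of_nonneg_right (ih fun t ht => h t (ht.trans T.lt_succ_self)) (exp_pos _).le
      _ = L 0 * exp (∑ t ∈ Icc 1 (T + 1), c t) := by
        rw [sum_Icc_succ_top (by omega), exp_add, mul_assoc]

theorem mul_exp_add_one_sub_mul_exp_neg_of_eq_half_log {ε α : ℝ} (h₀ : 0 < ε) (h₁ : ε < 1)
    (hα : α = 1 / 2 * log ((1 - ε) / ε)) :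
    ε * exp α + (1 - ε) * exp (-α) = 2 * √(ε * (1 - ε)) := by
  have hs : 0 < √ε := sqrt_pos.2 h₀
  have hr : 0 < √(1 - ε) := sqrt_pos.2 (by linarith)
  have hexp : exp α = √(1 - ε) / √ε := by
    rw [hα, ← sqrt_div' _ h₀.le, sqrt_eq_rpow, rpow_def_of_pos (div_pos (by linarith) h₀)]
    ring_nf
  rw [exp_neg, hexp, inv_div, sqrt_mul h₀.le]
  nth_rewrite 1 [← mul_self_sqrt h₀.le]
  nth_rewrite 2 [← mul_self_sqrt (by linarith : 0 ≤ 1 - ε)]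
  field_simp
  ring

theorem two_mul_sqrt_mul_one_sub_le_exp {ε c : ℝ} (hc : 0 ≤ c) (hcε : c ≤ 1 / 2 - ε) :
    2 * √(ε * (1 - ε)) ≤ exp (-2 * c ^ 2) := by
  have hsq : exp (-2 * c ^ 2) ^ 2 = exp (-(4 * c ^ 2)) := by
    rw [sq, ← exp_add]; ring_nf
  have := add_one_le_exp (-(4 * c ^ 2))
  rw [← le_div_iff₀' two_pos, sqrt_le_iff, div_pow, hsq]
  exact ⟨by positivity, by nlinarith⟩

section Boosting

variable {n : ℕ} {m : ℕ → Fin n → ℝ} {α : ℕ → ℝ}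

theorem cumScore_succ (t : ℕ) (i : Fin n) :
    cumScore n m α (t + 1) i = cumScore n m α t i + α (t + 1) * m (t + 1) i :=
  sum_Icc_succ_top (by omega) _

theorem expLoss_zero : expLoss n m α 0 = n := by
  simp [expLoss, cumScore]

theorem expLoss_pos (hn : 0 < n) (t : ℕ) : 0 < expLoss n m α t :=
  sum_pos (fun _ _ => exp_pos _) ⟨⟨0, hn⟩, mem_univ _⟩

theorem sum_expWeights (hn : 0 < n) (t : ℕ) : ∑ i, expWeights n m α t i = 1 := by
  simp only [expWeights, ← sum_div]
  exact div_self (expLoss_pos hn _).ne'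

theorem expWeights_pos (hn : 0 < n) (t : ℕ) (i : Fin n) : 0 < expWeights n m α t i :=
  div_pos (exp_pos _) (expLoss_pos hn _)

theorem expLoss_succ (hn : 0 < n) (t : ℕ) :
    expLoss n m α (t + 1) =
      expLoss n m α t * ∑ i, expWeights n m α (t + 1) i * exp (-(α (t + 1) * m (t + 1) i)) := by
  have hL := (expLoss_pos hn t (m := m) (α := α)).ne'
  conv_lhs => rw [expLoss]
  rw [mul_sum]
  refine sum_congr rfl fun i _ => ?_
  rw [expWeights, Nat.add_sub_cancel, cumScore_succ, neg_add, exp_add]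
  field_simp

theorem expLoss_succ_le (hn : 0 < n) {t : ℕ} (hm : ∀ i, m (t + 1) i = -1 ∨ m (t + 1) i = 1)
    {ε c : ℝ} (hε : ε = ∑ i, if m (t + 1) i = -1 then expWeights n m α (t + 1) i else 0)
    (hε₀ : 0 < ε) (hε₁ : ε < 1) (hα : α (t + 1) = 1 / 2 * log ((1 - ε) / ε))
    (hc₀ : 0 ≤ c) (hc : c ≤ 1 / 2 - ε) :
    expLoss n m α (t + 1) ≤ expLoss n m α t * exp (-2 * c ^ 2) := by
  have hsplit := sum_filter_add_sum_filter_not univ (fun i => m (t + 1) i = -1)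
    (expWeights n m α (t + 1))
  rw [← sum_filter] at hε
  rw [← hε, sum_expWeights hn, ← eq_sub_iff_add_eq'] at hsplit
  rw [expLoss_succ hn, sum_mul_comp_of_forall_eq_neg_one_or_eq_one hm
    (fun x => exp (-(α (t + 1) * x))), ← hε, hsplit]
  simp only [mul_neg, mul_one, neg_neg]
  rw [mul_exp_add_one_sub_mul_exp_neg_of_eq_half_log hε₀ hε₁ hα]
  exact mul_le_mul_of_nonneg_left (two_mul_sqrt_mul_one_sub_le_exp hc₀ hc)
    (expLoss_pos hn t).le

end Boosting

/-- **Main theorem: exponential loss bound with fairness cost.**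
Boosting for `T` rounds with `±1` margins, weighted errors `ε_t ∈ (0,1)`, and
`α_t = (1/2)·ln((1−ε_t)/ε_t)`.  If at each round there is a distribution
`w^t ∈ Δ_n` whose edge `γ_t^(w)` exceeds the fairness cost
`δ_t = √(KL(w^t‖q^t)/2)`, then
`L_exp(f_T) ≤ n · exp(−2 · Σ_t (γ_t^(w) − δ_t)^2)`. -/
theorem fairproj_exp_loss_bound (n : ℕ) (hn : 1 ≤ n) (T : ℕ)
    (m : ℕ → Fin n → ℝ) (α : ℕ → ℝ) (ε : ℕ → ℝ) (w : ℕ → Fin n → ℝ)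
    (γw δ : ℕ → ℝ)
    (hmargin : ∀ t ∈ Finset.Icc 1 T, ∀ i, m t i = -1 ∨ m t i = 1)
    (hε : ∀ t ∈ Finset.Icc 1 T,
      ε t = ∑ i, if m t i = -1 then expWeights n m α t i else 0)
    (hε_pos : ∀ t ∈ Finset.Icc 1 T, 0 < ε t)
    (hε_lt : ∀ t ∈ Finset.Icc 1 T, ε t < 1)
    (hα : ∀ t ∈ Finset.Icc 1 T, α t = (1 / 2) * Real.log ((1 - ε t) / ε t))
    (hw_nonneg : ∀ t ∈ Finset.Icc 1 T, ∀ i, 0 ≤ w t i)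
    (hw_sum : ∀ t ∈ Finset.Icc 1 T, ∑ i, w t i = 1)
    (hγw : ∀ t ∈ Finset.Icc 1 T, γw t = (1 / 2) * ∑ i, w t i * m t i)
    (hδ : ∀ t ∈ Finset.Icc 1 T,
      δ t = Real.sqrt (klDiv n (w t) (expWeights n m α t) / 2))
    (hedge : ∀ t ∈ Finset.Icc 1 T, δ t < γw t) :
    expLoss n m α T ≤ n * Real.exp (-2 * ∑ t ∈ Finset.Icc 1 T, (γw t - δ t) ^ 2) := by
  have hround : ∀ t < T, expLoss n m α (t + 1) ≤
      expLoss n m α t * exp (-2 * (γw (t + 1) - δ (t + 1)) ^ 2) := by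
    intro t ht
    have h : t + 1 ∈ Icc 1 T := mem_Icc.2 ⟨by omega, ht⟩
    have hpinsker := half_sum_mul_sub_half_sum_mul_le_sqrt_kl_div_two
      (q := expWeights n m α (t + 1)) (hmargin _ h)
      (hw_nonneg _ h) (hw_sum _ h) (expWeights_pos hn _) (sum_expWeights hn (t + 1))
    rw [half_sum_mul_eq_half_sub_sum_ite (hmargin _ h) (sum_expWeights hn (t + 1)), ← hε _ h,
      ← hγw _ h, ← klDiv, ← hδ _ h] at hpinsker
    exact expLoss_succ_le hn (hmargin _ h) (hε _ h) (hε_pos _ h) (hε_lt _ h) (hα _ h)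
      (sub_nonneg.2 (hedge _ h).le) (by linarith)
  have := le_mul_exp_sum_of_le_mul_exp (L := expLoss n m α)
    (c := fun t => -2 * (γw t - δ t) ^ 2) hround
  rwa [expLoss_zero, ← mul_sum] at this
end

section
/- Let n ≥ 1, let q ∈ Δ_n, let m ∈ {−1, +1}^n, and set ε = Σ_{i : m_i = −1} q_i. If 0 < ε < 1 and α = (1/2)·ln((1 − ε)/ε), then Σ_{i=1}^n q_i · exp(−α · m_i) = 2·√( ε · (1 − ε) ). -/
/-- **Per-round AdaBoost identity.**
For `q` in the simplex, margin vector `m ∈ {−1,+1}^n`, weighted error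
`ε = Σ_{i : m_i = −1} q_i` with `0 < ε < 1`, and `α = (1/2)·ln((1−ε)/ε)`:
`Σ_i q_i · exp(−α · m_i) = 2·√(ε·(1−ε))`. -/
theorem adaboost_per_round_identity (n : ℕ) (hn : 1 ≤ n) (q m : Fin n → ℝ)
    (hq_nonneg : ∀ i, 0 ≤ q i) (hq_sum : ∑ i, q i = 1)
    (hm : ∀ i, m i = -1 ∨ m i = 1)
    (ε α : ℝ)
    (hε : ε = ∑ i, if m i = -1 then q i else 0)
    (hε_pos : 0 < ε) (hε_lt : ε < 1)
    (hα : α = (1 / 2) * Real.log ((1 - ε) / ε)) :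
    ∑ i, q i * Real.exp (-(α * m i)) = 2 * Real.sqrt (ε * (1 - ε)) := by
  set E := Real.exp α with hE
  have hEpos : 0 < E := Real.exp_pos α
  have hE2 : E ^ 2 = (1 - ε) / ε := by
    have hpos : 0 < (1 - ε) / ε := div_pos (by linarith) hε_pos
    rw [hE, ← Real.exp_nat_mul, hα]
    rw [show (2 : ℕ) * ((1 / 2 : ℝ) * Real.log ((1 - ε) / ε)) = Real.log ((1 - ε) / ε) by
      push_cast; ring]
    exact Real.exp_log hpos
  -- split the sum
  have hsplit : ∑ i, q i * Real.exp (-(α * m i))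
      = ∑ i, ((if m i = -1 then q i else 0) * E + (if m i = -1 then 0 else q i) * E⁻¹) := by
    apply Finset.sum_congr rfl
    intro i _
    rcases hm i with h | h <;> simp [h, hE, ← Real.exp_neg] <;> norm_num
  have hε' : ∑ i, (if m i = -1 then 0 else q i) = 1 - ε := by
    have := Finset.sum_add_distrib (s := Finset.univ)
      (f := fun i => if m i = -1 then q i else 0) (g := fun i => if m i = -1 then 0 else q i)
    have h2 : ∀ i, (if m i = -1 then q i else 0) + (if m i = -1 then 0 else q i) = q i := by
      intro i; by_cases h : m i = -1 <;> simp [h]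
    have h3 : ε + ∑ i, (if m i = -1 then 0 else q i) = 1 := by
      rw [hε, ← this]
      simp_rw [h2]; exact hq_sum
    linarith
  rw [hsplit, Finset.sum_add_distrib, ← Finset.sum_mul, ← Finset.sum_mul, ← hε, hε']
  -- Now: ε * E + (1 - ε) * E⁻¹ = 2 * sqrt (ε * (1 - ε))
  have hkey : Real.sqrt (ε * (1 - ε)) = ε * E := by
    rw [show ε * (1 - ε) = (ε * E) ^ 2 by
      rw [mul_pow, hE2]; field_simp]
    exact Real.sqrt_sq (by positivity)
  rw [hkey]
  have h1 : (1 - ε) * E⁻¹ = ε * E := by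
    have : (1 - ε) = ε * E ^ 2 := by rw [hE2]; field_simp
    rw [this]; field_simp
  rw [h1]; ring
end

section
/- Let n ≥ 1 and K ≥ 1, let q ∈ Δ_n with q_i > 0 for all i, let g_1, …, g_K : {1, …, n} → ℝ be constraint features, and let ε > 0. For λ ∈ ℝ^K define Z(λ) = Σ_{i=1}^n q_i · exp(−Σ_{k=1}^K λ_k · g_k(i)). Then for every w ∈ Δ_n satisfying the fairness constraints |Σ_{i=1}^n w_i · g_k(i)| ≤ ε for all k ∈ {1, …, K}, and every λ ∈ ℝ^K, one has KL(w ‖ q) ≥ −ln Z(λ) − ε·‖λ‖₁, where ‖λ‖₁ = Σ_{k=1}^K |λ_k|. -/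
/-- **Weak duality for the KL projection.**
For any `w ∈ Δ_n` satisfying the fairness constraints `|Σ_i w_i g_k(i)| ≤ ε`
and any dual variable `λ ∈ ℝ^K`, with
`Z(λ) = Σ_i q_i · exp(−Σ_k λ_k g_k(i))`:
`KL(w‖q) ≥ −ln Z(λ) − ε·‖λ‖₁`. -/
theorem kl_projection_weak_duality (n K : ℕ) (hn : 1 ≤ n) (hK : 1 ≤ K)
    (q : Fin n → ℝ)
    (hq_nonneg : ∀ i, 0 ≤ q i) (hq_sum : ∑ i, q i = 1) (hq_pos : ∀ i, 0 < q i)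
    (g : Fin K → Fin n → ℝ) (ε : ℝ) (hε : 0 < ε)
    (w : Fin n → ℝ) (hw_nonneg : ∀ i, 0 ≤ w i) (hw_sum : ∑ i, w i = 1)
    (hfair : ∀ k, |∑ i, w i * g k i| ≤ ε)
    (lam : Fin K → ℝ) :
    klDiv n w q
      ≥ -Real.log (∑ i, q i * Real.exp (-(∑ k, lam k * g k i)))
        - ε * ∑ k, |lam k| := by
  set L : Fin n → ℝ := fun i => ∑ k, lam k * g k i with hL
  set Z : ℝ := ∑ i, q i * Real.exp (-(L i)) with hZ
  have hZpos : 0 < Z :=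
    Finset.sum_pos (fun i _ => mul_pos (hq_pos i) (Real.exp_pos _))
      ⟨⟨0, hn⟩, Finset.mem_univ _⟩
  -- Gibbs-type inequality via log t ≤ t - 1
  have key : ∑ i, w i * Real.log (q i * Real.exp (-(L i)) / (w i * Z)) ≤ 0 := by
    calc ∑ i, w i * Real.log (q i * Real.exp (-(L i)) / (w i * Z))
        ≤ ∑ i, (q i * Real.exp (-(L i)) / Z - w i) := by
          apply Finset.sum_le_sum
          intro i _
          rcases eq_or_lt_of_le (hw_nonneg i) with h0 | hpos
          · rw [← h0]
            have hqi := hq_pos i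
            have : (0:ℝ) ≤ q i * Real.exp (-(L i)) / Z := by positivity
            simpa using this
          · have ht : 0 < q i * Real.exp (-(L i)) / (w i * Z) := by
              have := hq_pos i; positivity
            have hlog := Real.log_le_sub_one_of_pos ht
            calc w i * Real.log (q i * Real.exp (-(L i)) / (w i * Z))
                ≤ w i * (q i * Real.exp (-(L i)) / (w i * Z) - 1) :=
                  mul_le_mul_of_nonneg_left hlog hpos.le
              _ = q i * Real.exp (-(L i)) / Z - w i := by
                  field_simp
      _ = 0 := by
          rw [Finset.sum_sub_distrib, ← Finset.sum_div, ← hZ, div_self hZpos.ne',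
            hw_sum, sub_self]
  -- per-term identity
  have hid : ∀ i, w i * Real.log (w i / q i)
      = -(w i * Real.log (q i * Real.exp (-(L i)) / (w i * Z)))
        - w i * L i - w i * Real.log Z := by
    intro i
    rcases eq_or_lt_of_le (hw_nonneg i) with h0 | hpos
    · rw [← h0]; ring
    · have hqi := hq_pos i
      have e1 : Real.log (q i * Real.exp (-(L i)) / (w i * Z))
          = Real.log (q i) + (-(L i)) - (Real.log (w i) + Real.log Z) := by
        rw [Real.log_div (by positivity) (by positivity),
            Real.log_mul hqi.ne' (Real.exp_ne_zero _), Real.log_exp,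
            Real.log_mul hpos.ne' hZpos.ne']
      rw [Real.log_div hpos.ne' hqi.ne', e1]
      ring
  have hsum : klDiv n w q
      = -(∑ i, w i * Real.log (q i * Real.exp (-(L i)) / (w i * Z)))
        - (∑ i, w i * L i) - Real.log Z := by
    unfold klDiv
    rw [Finset.sum_congr rfl (fun i _ => hid i)]
    rw [Finset.sum_sub_distrib, Finset.sum_sub_distrib, Finset.sum_neg_distrib,
      ← Finset.sum_mul, hw_sum, one_mul]
  -- bound on the linear term
  have hlin : |∑ i, w i * L i| ≤ ε * ∑ k, |lam k| := by
    have hswap : ∑ i, w i * L i = ∑ k, lam k * (∑ i, w i * g k i) := by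
      simp only [hL, Finset.mul_sum]
      rw [Finset.sum_comm]
      refine Finset.sum_congr rfl fun k _ => Finset.sum_congr rfl fun i _ => by ring
    rw [hswap]
    calc |∑ k, lam k * (∑ i, w i * g k i)| ≤ ∑ k, |lam k * (∑ i, w i * g k i)| :=
          Finset.abs_sum_le_sum_abs _ _
      _ ≤ ∑ k, |lam k| * ε := by
          apply Finset.sum_le_sum
          intro k _
          rw [abs_mul]
          exact mul_le_mul_of_nonneg_left (hfair k) (abs_nonneg _)
      _ = ε * ∑ k, |lam k| := by rw [← Finset.sum_mul]; ring
  have h1 : -(∑ i, w i * L i) ≥ -(ε * ∑ k, |lam k|) :=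
    neg_le_neg (le_of_abs_le hlin)
  rw [hsum]
  have h2 : -(∑ i, w i * Real.log (q i * Real.exp (-(L i)) / (w i * Z))) ≥ 0 :=
    neg_nonneg.mpr key
  linarith
end

section
/- Let n ≥ 1 and K ≥ 1, let q ∈ Δ_n with q_i > 0 for all i, let g_1, …, g_K : {1, …, n} → ℝ, and let ε > 0. Let λ* ∈ ℝ^K, define Z(λ*) = Σ_{i=1}^n q_i · exp(−Σ_k λ*_k · g_k(i)) and w*_i = q_i · exp(−Σ_k λ*_k · g_k(i)) / Z(λ*). Suppose (feasibility) |Σ_i w*_i · g_k(i)| ≤ ε for all k, and (complementary slackness) λ*_k · (Σ_i w*_i · g_k(i)) = ε·|λ*_k| for all k. Then w* minimizes KL(w ‖ q) over all w ∈ Δ_n satisfying |Σ_i w_i · g_k(i)| ≤ ε for all k, and the minimum value is KL(w* ‖ q) = −ln Z(λ*) − ε·‖λ*‖₁, where ‖λ*‖₁ = Σ_k |λ*_k|. -/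
/-- Partition function of the exponential tilt:
`Z(λ) = Σ_i q_i · exp(−Σ_k λ_k g_k(i))`. -/
noncomputable def tiltZ (n K : ℕ) (q : Fin n → ℝ) (g : Fin K → Fin n → ℝ)
    (lam : Fin K → ℝ) : ℝ :=
  ∑ i, q i * Real.exp (-(∑ k, lam k * g k i))

/-- Exponentially tilted distribution:
`w(λ)_i = q_i · exp(−Σ_k λ_k g_k(i)) / Z(λ)`. -/
noncomputable def tiltDist (n K : ℕ) (q : Fin n → ℝ) (g : Fin K → Fin n → ℝ)
    (lam : Fin K → ℝ) (i : Fin n) : ℝ :=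
  q i * Real.exp (-(∑ k, lam k * g k i)) / tiltZ n K q g lam

lemma xlogxy (x y : ℝ) (hx : 0 ≤ x) (hy : 0 < y) :
    x - y ≤ x * Real.log (x / y) := by
  rcases eq_or_lt_of_le hx with h | h
  · simp [← h]; linarith
  · have h1 : Real.log (y / x) ≤ y / x - 1 :=
      Real.log_le_sub_one_of_pos (div_pos hy h)
    have h2 : Real.log (y / x) = -Real.log (x / y) := by
      rw [← Real.log_inv]; congr 1; field_simp
    have h3 : 1 - y / x ≤ Real.log (x / y) := by rw [h2] at h1; linarith
    have := mul_le_mul_of_nonneg_left h3 (le_of_lt h)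
    have hxx : x * (1 - y / x) = x - y := by field_simp
    linarith [hxx ▸ this]

/-- **KL projection via dual (optimality from KKT conditions).** -/
theorem kl_projection_optimality (n K : ℕ) (hn : 1 ≤ n) (hK : 1 ≤ K)
    (q : Fin n → ℝ)
    (hq_nonneg : ∀ i, 0 ≤ q i) (hq_sum : ∑ i, q i = 1) (hq_pos : ∀ i, 0 < q i)
    (g : Fin K → Fin n → ℝ) (ε : ℝ) (hε : 0 < ε)
    (lamStar : Fin K → ℝ)
    (hfeas : ∀ k, |∑ i, tiltDist n K q g lamStar i * g k i| ≤ ε)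
    (hcs : ∀ k, lamStar k * (∑ i, tiltDist n K q g lamStar i * g k i)
      = ε * |lamStar k|) :
    (∀ w : Fin n → ℝ, (∀ i, 0 ≤ w i) → (∑ i, w i = 1) →
        (∀ k, |∑ i, w i * g k i| ≤ ε) →
        klDiv n (tiltDist n K q g lamStar) q ≤ klDiv n w q) ∧
      klDiv n (tiltDist n K q g lamStar) q
        = -Real.log (tiltZ n K q g lamStar) - ε * ∑ k, |lamStar k| := by
  classical
  set Z := tiltZ n K q g lamStar with hZdef
  have hne : (Finset.univ : Finset (Fin n)).Nonempty :=
    ⟨⟨0, hn⟩, Finset.mem_univ _⟩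
  have hZpos : 0 < Z := Finset.sum_pos
    (fun i _ => mul_pos (hq_pos i) (Real.exp_pos _)) hne
  set ws := tiltDist n K q g lamStar with hwsdef
  have hwspos : ∀ i, 0 < ws i := fun i =>
    div_pos (mul_pos (hq_pos i) (Real.exp_pos _)) hZpos
  have hwssum : ∑ i, ws i = 1 := by
    simp only [hwsdef, tiltDist, ← hZdef]
    rw [← Finset.sum_div]
    exact div_self (ne_of_gt hZpos)
  have hlog : ∀ i, Real.log (ws i / q i)
      = -(∑ k, lamStar k * g k i) - Real.log Z := by
    intro i
    have hq := hq_pos i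
    have h1 : ws i / q i = Real.exp (-(∑ k, lamStar k * g k i)) / Z := by
      simp only [hwsdef, tiltDist, ← hZdef]
      field_simp
    rw [h1, Real.log_div (Real.exp_ne_zero _) (ne_of_gt hZpos), Real.log_exp]
  have hkey : ∀ v : Fin n → ℝ, (∑ i, v i = 1) →
      ∑ i, v i * Real.log (ws i / q i)
        = -(∑ k, lamStar k * ∑ i, v i * g k i) - Real.log Z := by
    intro v hv
    have step1 : ∀ i, v i * Real.log (ws i / q i)
        = (∑ k, -(lamStar k * (v i * g k i))) - v i * Real.log Z := by
      intro i
      rw [hlog i]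
      have : (∑ k, -(lamStar k * (v i * g k i)))
          = -(v i * ∑ k, lamStar k * g k i) := by
        rw [Finset.mul_sum, ← Finset.sum_neg_distrib]
        exact Finset.sum_congr rfl fun k _ => by ring
      rw [this]; ring
    calc ∑ i, v i * Real.log (ws i / q i)
        = ∑ i, ((∑ k, -(lamStar k * (v i * g k i))) - v i * Real.log Z) :=
          Finset.sum_congr rfl fun i _ => step1 i
      _ = (∑ i, ∑ k, -(lamStar k * (v i * g k i))) - (∑ i, v i) * Real.log Z := by
          rw [Finset.sum_sub_distrib, Finset.sum_mul]
      _ = (∑ k, ∑ i, -(lamStar k * (v i * g k i))) - Real.log Z := by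
          rw [Finset.sum_comm, hv, one_mul]
      _ = -(∑ k, lamStar k * ∑ i, v i * g k i) - Real.log Z := by
          congr 1
          rw [← Finset.sum_neg_distrib]
          refine Finset.sum_congr rfl fun k _ => ?_
          rw [Finset.mul_sum, ← Finset.sum_neg_distrib]
  have hval : klDiv n ws q = -Real.log Z - ε * ∑ k, |lamStar k| := by
    rw [klDiv, hkey ws hwssum]
    have : (∑ k, lamStar k * ∑ i, ws i * g k i) = ε * ∑ k, |lamStar k| := by
      rw [Finset.mul_sum]
      exact Finset.sum_congr rfl fun k _ => hcs k
    rw [this]; ring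
  refine ⟨?_, hval⟩
  intro w hw_nonneg hw_sum hw_feas
  -- Gibbs: ∑ w_i log(w_i/q_i) ≥ ∑ w_i log(ws_i/q_i)
  have gibbs : ∑ i, w i * Real.log (ws i / q i) ≤ klDiv n w q := by
    rw [klDiv]
    have hterm : ∀ i ∈ Finset.univ, w i - ws i ≤
        w i * Real.log (w i / q i) - w i * Real.log (ws i / q i) := by
      intro i _
      rcases eq_or_lt_of_le (hw_nonneg i) with h | h
      · simp [← h]
        linarith [hwspos i]
      · have hdiff : Real.log (w i / q i) - Real.log (ws i / q i)
            = Real.log (w i / ws i) := by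
          rw [Real.log_div (ne_of_gt h) (ne_of_gt (hq_pos i)),
            Real.log_div (ne_of_gt (hwspos i)) (ne_of_gt (hq_pos i)),
            Real.log_div (ne_of_gt h) (ne_of_gt (hwspos i))]
          ring
        have := xlogxy (w i) (ws i) (le_of_lt h) (hwspos i)
        nlinarith [hdiff]
    have := Finset.sum_le_sum hterm
    rw [Finset.sum_sub_distrib, hw_sum, hwssum] at this
    rw [Finset.sum_sub_distrib] at this
    linarith
  -- dual slack
  have hdual : ∑ k, lamStar k * ∑ i, w i * g k i ≤ ε * ∑ k, |lamStar k| := by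
    rw [Finset.mul_sum]
    refine Finset.sum_le_sum fun k _ => ?_
    calc lamStar k * ∑ i, w i * g k i
        ≤ |lamStar k * ∑ i, w i * g k i| := le_abs_self _
      _ = |lamStar k| * |∑ i, w i * g k i| := abs_mul _ _
      _ ≤ |lamStar k| * ε := mul_le_mul_of_nonneg_left (hw_feas k) (abs_nonneg _)
      _ = ε * |lamStar k| := mul_comm _ _
  have h2 := hkey w hw_sum
  rw [hval]
  linarith [gibbs, h2 ▸ gibbs]
end

section
/- In the boosting setup below, suppose for each round t ∈ {1, …, T} the weighted error ε_t = Σ_{i : m^t_i = −1} q^t_i satisfies 0 < ε_t < 1 and α_t = (1/2)·ln((1 − ε_t)/ε_t). Then the final exponential loss satisfies the exact product formula L_exp(f_T) = n · Π_{t=1}^T 2·√( ε_t · (1 − ε_t) ). -/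
lemma adaboost_factor (e : ℝ) (h0 : 0 < e) (h1 : e < 1) :
    e * Real.exp ((1 / 2) * Real.log ((1 - e) / e))
      + (1 - e) * Real.exp (-((1 / 2) * Real.log ((1 - e) / e)))
      = 2 * Real.sqrt (e * (1 - e)) := by
  have h1e : 0 < 1 - e := by linarith
  have hq : 0 < (1 - e) / e := div_pos h1e h0
  have hexp : Real.exp ((1 / 2) * Real.log ((1 - e) / e)) = Real.sqrt ((1 - e) / e) := by
    rw [Real.sqrt_eq_rpow, Real.rpow_def_of_pos hq]; ring_nf
  have hexp' : Real.exp (-((1 / 2) * Real.log ((1 - e) / e))) = Real.sqrt (e / (1 - e)) := by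
    rw [Real.exp_neg, hexp, ← Real.sqrt_inv, inv_div]
  have hs0 : (0:ℝ) < Real.sqrt e := Real.sqrt_pos.mpr h0
  have hs1 : (0:ℝ) < Real.sqrt (1 - e) := Real.sqrt_pos.mpr h1e
  have key1 : e * Real.sqrt ((1 - e) / e) = Real.sqrt e * Real.sqrt (1 - e) := by
    rw [Real.sqrt_div h1e.le]
    field_simp
    nlinarith [Real.mul_self_sqrt h0.le]
  have key2 : (1 - e) * Real.sqrt (e / (1 - e)) = Real.sqrt e * Real.sqrt (1 - e) := by
    rw [Real.sqrt_div h0.le]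
    field_simp
    nlinarith [Real.mul_self_sqrt h1e.le]
  rw [hexp, hexp', key1, key2, Real.sqrt_mul h0.le]
  ring


/-- **Exact product formula for the exponential loss of AdaBoost.**
With `±1` margins, weighted errors `ε_t ∈ (0,1)` and
`α_t = (1/2)·ln((1−ε_t)/ε_t)`:
`L_exp(f_T) = n · Π_{t=1}^T 2·√(ε_t·(1−ε_t))`. -/
theorem expLoss_product_formula (n : ℕ) (hn : 1 ≤ n) (T : ℕ)
    (m : ℕ → Fin n → ℝ) (α : ℕ → ℝ) (ε : ℕ → ℝ)
    (hmargin : ∀ t ∈ Finset.Icc 1 T, ∀ i, m t i = -1 ∨ m t i = 1)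
    (hε : ∀ t ∈ Finset.Icc 1 T,
      ε t = ∑ i, if m t i = -1 then expWeights n m α t i else 0)
    (hε_pos : ∀ t ∈ Finset.Icc 1 T, 0 < ε t)
    (hε_lt : ∀ t ∈ Finset.Icc 1 T, ε t < 1)
    (hα : ∀ t ∈ Finset.Icc 1 T, α t = (1 / 2) * Real.log ((1 - ε t) / ε t)) :
    expLoss n m α T
      = n * ∏ t ∈ Finset.Icc 1 T, 2 * Real.sqrt (ε t * (1 - ε t)) := by
  induction T with
  | zero => simp [expLoss, cumScore]
  | succ T ih =>
    have hsub : Finset.Icc 1 T ⊆ Finset.Icc 1 (T + 1) :=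
      Finset.Icc_subset_Icc_right (by omega)
    have ihe := ih (fun t ht i => hmargin t (hsub ht) i) (fun t ht => hε t (hsub ht))
      (fun t ht => hε_pos t (hsub ht)) (fun t ht => hε_lt t (hsub ht))
      (fun t ht => hα t (hsub ht))
    have hT1 : T + 1 ∈ Finset.Icc 1 (T + 1) := by simp
    have hLpos : 0 < expLoss n m α T := by
      unfold expLoss
      apply Finset.sum_pos (fun i _ => Real.exp_pos _)
      rw [Finset.univ_nonempty_iff]
      exact Fin.pos_iff_nonempty.mp (by omega)
    have hcs : ∀ i, cumScore n m α (T + 1) i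
        = cumScore n m α T i + α (T + 1) * m (T + 1) i := by
      intro i; unfold cumScore
      rw [Finset.sum_Icc_succ_top (by omega)]
    have hL : expLoss n m α (T + 1)
        = ∑ i, ((if m (T + 1) i = -1 then Real.exp (-(cumScore n m α T i)) else 0)
            * Real.exp (α (T + 1))
          + (if m (T + 1) i = -1 then 0 else Real.exp (-(cumScore n m α T i)))
            * Real.exp (-(α (T + 1)))) := by
      unfold expLoss
      refine Finset.sum_congr rfl fun i _ => ?_
      rw [hcs i, neg_add, Real.exp_add]
      rcases hmargin (T + 1) hT1 i with h | h <;> norm_num [h]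
    set A := ∑ i, (if m (T + 1) i = -1 then Real.exp (-(cumScore n m α T i)) else 0) with hAdef
    have hA : A = ε (T + 1) * expLoss n m α T := by
      have he := hε (T + 1) hT1
      simp only [expWeights, Nat.add_sub_cancel] at he
      rw [he, Finset.sum_mul]
      refine Finset.sum_congr rfl fun i _ => ?_
      by_cases h : m (T + 1) i = -1 <;> simp [h, div_mul_cancel₀, hLpos.ne']
    have hB : (∑ i, (if m (T + 1) i = -1 then 0 else Real.exp (-(cumScore n m α T i))))
        = expLoss n m α T - A := by
      rw [eq_sub_iff_add_eq, hAdef, ← Finset.sum_add_distrib]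
      unfold expLoss
      refine Finset.sum_congr rfl fun i _ => ?_
      by_cases h : m (T + 1) i = -1 <;> simp [h]
    have hstep : expLoss n m α (T + 1)
        = expLoss n m α T * (2 * Real.sqrt (ε (T + 1) * (1 - ε (T + 1)))) := by
      rw [hL, Finset.sum_add_distrib, ← Finset.sum_mul, ← Finset.sum_mul, ← hAdef, hB, hA,
        hα (T + 1) hT1]
      have := adaboost_factor (ε (T + 1)) (hε_pos (T + 1) hT1) (hε_lt (T + 1) hT1)
      nlinarith [this, hLpos]
    rw [hstep, ihe, Finset.prod_Icc_succ_top (by omega : 1 ≤ T + 1)]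
    ring
end

section
/- In the boosting setup below, suppose at round t the weighted error ε_t = Σ_{i : m^t_i = −1} q^t_i satisfies 0 < ε_t < 1/2 and α_t = (1/2)·ln((1 − ε_t)/ε_t). Then the exponential loss strictly decreases at round t: L_exp(f_t) < L_exp(f_{t−1}). -/
/-- **Strict decrease of the exponential loss.**
If at round `t ≥ 1` the weighted error satisfies `0 < ε_t < 1/2` and
`α_t = (1/2)·ln((1−ε_t)/ε_t)`, then `L_exp(f_t) < L_exp(f_{t−1})`. -/
theorem expLoss_strict_decrease (n : ℕ) (hn : 1 ≤ n)
    (m : ℕ → Fin n → ℝ) (α : ℕ → ℝ) (t : ℕ) (ht : 1 ≤ t) (εt : ℝ)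
    (hmargin : ∀ i, m t i = -1 ∨ m t i = 1)
    (hε : εt = ∑ i, if m t i = -1 then expWeights n m α t i else 0)
    (hε_pos : 0 < εt) (hε_lt : εt < 1 / 2)
    (hα : α t = (1 / 2) * Real.log ((1 - εt) / εt)) :
    expLoss n m α t < expLoss n m α (t - 1) := by
  have hne : (Finset.univ : Finset (Fin n)).Nonempty := by
    simpa [Finset.univ_nonempty_iff] using Fin.pos_iff_nonempty.mp hn
  have hL : 0 < expLoss n m α (t - 1) :=
    Finset.sum_pos (fun i _ => Real.exp_pos _) hne
  set L := expLoss n m α (t - 1) with hLdef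
  set A : ℝ := ∑ i, if m t i = -1 then Real.exp (-(cumScore n m α (t - 1) i)) else 0 with hAdef
  set B : ℝ := ∑ i, if m t i = -1 then 0 else Real.exp (-(cumScore n m α (t - 1) i)) with hBdef
  have hA : A = εt * L := by
    have : εt = A / L := by
      rw [hε, hAdef, Finset.sum_div]
      refine Finset.sum_congr rfl fun i _ => ?_
      by_cases h : m t i = -1 <;> simp [h, expWeights, hLdef]
    rw [this, div_mul_cancel₀ _ (ne_of_gt hL)]
  have hAB : A + B = L := by
    rw [hAdef, hBdef, ← Finset.sum_add_distrib]
    refine Finset.sum_congr rfl fun i _ => ?_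
    by_cases h : m t i = -1 <;> simp [h]
  have hB : B = (1 - εt) * L := by nlinarith [hA, hAB]
  have hIcc : Finset.Icc 1 t = insert t (Finset.Icc 1 (t - 1)) := by
    ext x; simp only [Finset.mem_Icc, Finset.mem_insert]; omega
  have hscore : ∀ i, cumScore n m α t i = α t * m t i + cumScore n m α (t - 1) i := by
    intro i
    unfold cumScore
    rw [hIcc, Finset.sum_insert (by simp [Finset.mem_Icc]; omega)]
  have hsum : expLoss n m α t = Real.exp (α t) * A + Real.exp (-(α t)) * B := by
    rw [hAdef, hBdef, Finset.mul_sum, Finset.mul_sum, ← Finset.sum_add_distrib]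
    refine Finset.sum_congr rfl fun i _ => ?_
    rcases hmargin i with h | h
    · simp only [h, if_pos rfl, mul_zero, add_zero, hscore i]
      rw [show -(α t * (-1) + cumScore n m α (t - 1) i) = α t + -(cumScore n m α (t - 1) i) by ring,
        Real.exp_add]
      simp
    · have h' : m t i ≠ -1 := by rw [h]; norm_num
      simp only [hscore i, h, if_neg h', mul_zero, zero_add, mul_one]
      rw [show -(α t + cumScore n m α (t - 1) i) = -(α t) + -(cumScore n m α (t - 1) i) by ring,
        Real.exp_add]
      norm_num
  have h1ε : 0 < 1 - εt := by linarith
  have hfrac : 0 < (1 - εt) / εt := div_pos h1ε hε_pos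
  set a : ℝ := Real.exp (α t) with hadef
  have ha : 0 < a := Real.exp_pos _
  have ha2 : a ^ 2 * εt = 1 - εt := by
    have : a ^ 2 = (1 - εt) / εt := by
      rw [hadef, sq, ← Real.exp_add, hα, show (1:ℝ)/2 * Real.log ((1 - εt)/εt) +
        1/2 * Real.log ((1 - εt)/εt) = Real.log ((1 - εt)/εt) by ring, Real.exp_log hfrac]
    rw [this, div_mul_cancel₀ _ (ne_of_gt hε_pos)]
  have hkey : Real.exp (-(α t)) * (1 - εt) = a * εt := by
    rw [Real.exp_neg, ← hadef, ← ha2]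
    field_simp
  have h2 : expLoss n m α t = 2 * a * εt * L := by
    rw [hsum, hA, hB, show Real.exp (-(α t)) * ((1 - εt) * L)
      = (Real.exp (-(α t)) * (1 - εt)) * L by ring, hkey]
    ring
  rw [h2]
  have hlt : 2 * a * εt < 1 := by
    nlinarith [sq_nonneg (1 - 2 * εt), sq_nonneg (2 * a * εt - 1), mul_pos ha hε_pos]
  nlinarith [hL, hlt]
end
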